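/- arXiv:1503.02773 — 2 statements merged into one kernel-verified Lean document; each statement's English description precedes it below -/
import Mathlib

section
/- Let S be a slice of an LBFS of a graph G with maximal subslices x, S_1, ..., S_k in order. Then every vertex y ∈ S_i is either adjacent to all vertices of S_j or to no vertex of S_j, for every j > i. -/
/-- The LBFS label of vertex `v` just before step `t`: for each earlier step `i < t`
(in increasing order of `i`) at which a neighbour of `v` was explored, the value `n - i`
is appended. -/
def lbfsLabel {V : Type*} (G : SimpleGraph V) [DecidableRel G.Adj] (σ : ℕ → V)
    (n t : ℕ) (v : V) : List ℕ :=
  ((List.range t).filter (fun i => decide (G.Adj (σ i) v))).map (fun i => n - i)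

/-- `σ` (restricted to `[0,n)`) is a Lexicographic Breadth-First Search ordering of `G`:
it enumerates all vertices, and at each step the chosen vertex has lexicographically
largest label among the unexplored vertices. -/
def IsLBFS {V : Type*} (G : SimpleGraph V) [DecidableRel G.Adj] (n : ℕ) (σ : ℕ → V) : Prop :=
  Set.BijOn σ (Set.Iio n) Set.univ ∧
    ∀ t < n, ∀ v : V, (∀ i < t, σ i ≠ v) →
      ¬ List.Lex (· < ·) (lbfsLabel G σ n t (σ t)) (lbfsLabel G σ n t v)

/-- The slice defined at step `t`: the unexplored vertices sharing the (lexicographically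
largest) label of the chosen vertex `σ t` just before step `t`. -/
def sliceAt {V : Type*} (G : SimpleGraph V) [DecidableRel G.Adj] (σ : ℕ → V) (n t : ℕ) :
    Set V :=
  {v | (∀ i < t, σ i ≠ v) ∧ lbfsLabel G σ n t v = lbfsLabel G σ n t (σ t)}

/-- `S` is a slice of the LBFS. -/
def IsSlice {V : Type*} (G : SimpleGraph V) [DecidableRel G.Adj] (σ : ℕ → V) (n : ℕ)
    (S : Set V) : Prop :=
  ∃ t < n, S = sliceAt G σ n t

/-- The slice defined at step `u` is a maximal (proper) subslice of the slice at step `t`. -/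
def IsMaxSubsliceAt {V : Type*} (G : SimpleGraph V) [DecidableRel G.Adj] (σ : ℕ → V)
    (n t u : ℕ) : Prop :=
  u < n ∧ sliceAt G σ n u ⊂ sliceAt G σ n t ∧
    ∀ w < n, ¬(sliceAt G σ n u ⊂ sliceAt G σ n w ∧ sliceAt G σ n w ⊂ sliceAt G σ n t)

/-- `u 1, …, u k` are the steps defining the maximal subslices `S_1, …, S_k` of the slice
at step `t`, listed in the order the LBFS defines them (the initial vertex `σ t`, as a
singleton, being by convention the zeroth maximal subslice). -/
def MaxSubsliceEnum {V : Type*} (G : SimpleGraph V) [DecidableRel G.Adj] (σ : ℕ → V)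
    (n t k : ℕ) (u : ℕ → ℕ) : Prop :=
  (∀ i, 1 ≤ i → i ≤ k → IsMaxSubsliceAt G σ n t (u i)) ∧
  (∀ i j, 1 ≤ i → i < j → j ≤ k → u i < u j) ∧
  (∀ i, 1 ≤ i → i ≤ k → t < u i) ∧
  (∀ w, w < n → IsMaxSubsliceAt G σ n t w →
    ∃ i, 1 ≤ i ∧ i ≤ k ∧ sliceAt G σ n w = sliceAt G σ n (u i))

/-- The edge `ab` is active for the slice at step `t`: both endpoints lie in that slice
but in different maximal subslices of it (i.e. no maximal subslice contains both). -/
def activeFor {V : Type*} (G : SimpleGraph V) [DecidableRel G.Adj] (σ : ℕ → V)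
    (n t : ℕ) (a b : V) : Prop :=
  G.Adj a b ∧ a ∈ sliceAt G σ n t ∧ b ∈ sliceAt G σ n t ∧
    ∀ w, IsMaxSubsliceAt G σ n t w → ¬(a ∈ sliceAt G σ n w ∧ b ∈ sliceAt G σ n w)

/-!
A vertex `y` of `S_i` is already explored when `S_j` is created. Otherwise, since an LBFS
keeps choosing from a slice as long as it has unexplored vertices, the initial vertex of `S_j`
would lie in `S_i`; the labels then force `S_j ⊆ S_i`, which is impossible for two distinct
maximal subslices. All vertices of `S_j` carry the same label when `S_j` is created, so they
agree on adjacency to every explored vertex, `y` among them.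
-/

theorem List.Lex.append_of_forall_rel {α : Type*} {r : α → α → Prop} {l₁ l₂ t₁ t₂ : List α}
    (h : List.Lex r l₁ l₂) (ht : ∀ x ∈ t₁, ∀ y ∈ l₂, r x y) :
    List.Lex r (l₁ ++ t₁) (l₂ ++ t₂) := by
  induction h with
  | @nil b _ =>
    cases t₁ with
    | nil => exact .nil
    | cons x _ => exact .rel (ht x (by simp) b (by simp))
  | cons _ ih => exact .cons (ih fun x hx y hy => ht x hx y (by simp [hy]))
  | rel h => exact .rel h

section LBFS

variable {V : Type*} {G : SimpleGraph V} [DecidableRel G.Adj] {σ : ℕ → V} {n : ℕ}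

theorem exists_lbfsLabel_eq_append {s s' : ℕ} (h : s ≤ s') (v : V) :
    ∃ tail, lbfsLabel G σ n s' v = lbfsLabel G σ n s v ++ tail ∧ ∀ x ∈ tail, x ≤ n - s := by
  obtain ⟨d, rfl⟩ := Nat.exists_eq_add_of_le h
  refine ⟨(((List.range d).map (s + ·)).filter fun i => G.Adj (σ i) v).map (n - ·), ?_, ?_⟩
  · simp only [lbfsLabel, List.range_add, List.filter_append, List.map_append]
  · simp only [List.mem_map, List.mem_filter, List.mem_range]
    rintro _ ⟨_, ⟨⟨i, -, rfl⟩, -⟩, rfl⟩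
    omega

theorem lt_of_mem_lbfsLabel {s : ℕ} (hs : s ≤ n) {v : V} {x : ℕ}
    (hx : x ∈ lbfsLabel G σ n s v) : n - s < x := by
  simp only [lbfsLabel, List.mem_map, List.mem_filter, List.mem_range] at hx
  obtain ⟨m, ⟨hm, -⟩, rfl⟩ := hx
  omega

theorem sub_mem_lbfsLabel_iff {s m : ℕ} (hs : s ≤ n) (hm : m < s) {v : V} :
    n - m ∈ lbfsLabel G σ n s v ↔ G.Adj (σ m) v := by
  simp only [lbfsLabel, List.mem_map, List.mem_filter, List.mem_range, decide_eq_true_eq]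
  constructor
  · rintro ⟨m', ⟨hm', hadj⟩, heq⟩
    obtain rfl : m' = m := by omega
    exact hadj
  · exact fun hadj => ⟨m, ⟨hm, hadj⟩, rfl⟩

theorem lbfsLabel_lex_mono {s s' : ℕ} (hs : s ≤ n) (hss' : s ≤ s') {a b : V}
    (h : List.Lex (· < ·) (lbfsLabel G σ n s a) (lbfsLabel G σ n s b)) :
    List.Lex (· < ·) (lbfsLabel G σ n s' a) (lbfsLabel G σ n s' b) := by
  obtain ⟨ta, hta, hta_le⟩ := exists_lbfsLabel_eq_append (G := G) (σ := σ) (n := n) hss' a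
  obtain ⟨tb, htb, -⟩ := exists_lbfsLabel_eq_append (G := G) (σ := σ) (n := n) hss' b
  rw [hta, htb]
  exact h.append_of_forall_rel fun x hx y hy =>
    (hta_le x hx).trans_lt (lt_of_mem_lbfsLabel hs hy)

theorem lbfsLabel_eq_iff {s : ℕ} (hs : s ≤ n) {a b : V} :
    lbfsLabel G σ n s a = lbfsLabel G σ n s b ↔ ∀ m < s, (G.Adj (σ m) a ↔ G.Adj (σ m) b) := by
  constructor
  · intro h m hm
    rw [← sub_mem_lbfsLabel_iff hs hm, ← sub_mem_lbfsLabel_iff hs hm, h]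
  · intro h
    unfold lbfsLabel
    congr 1
    exact List.filter_congr fun m hm => decide_eq_decide.2 (h m (List.mem_range.1 hm))

theorem mem_sliceAt_self (hinj : Set.InjOn σ (Set.Iio n)) {s : ℕ} (hs : s < n) :
    σ s ∈ sliceAt G σ n s :=
  ⟨fun _ hm h => hm.ne (hinj (hm.trans hs) hs h), rfl⟩

theorem sliceAt_subset_of_mem {s s' : ℕ} (hss' : s ≤ s') (hs' : s' ≤ n) {a : V}
    (ha : a ∈ sliceAt G σ n s) (ha' : a ∈ sliceAt G σ n s') :
    sliceAt G σ n s' ⊆ sliceAt G σ n s := by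
  intro w hw
  refine ⟨fun m hm => hw.1 m (hm.trans_le hss'), ?_⟩
  have hwa := (lbfsLabel_eq_iff hs').1 (hw.2.trans ha'.2.symm)
  exact ((lbfsLabel_eq_iff (hss'.trans hs')).2 fun m hm => hwa m (hm.trans_le hss')).trans ha.2

theorem adj_iff_of_mem_sliceAt {s m : ℕ} (hs : s ≤ n) (hm : m < s) {z : V}
    (hz : z ∈ sliceAt G σ n s) : G.Adj (σ m) z ↔ G.Adj (σ m) (σ s) :=
  (lbfsLabel_eq_iff hs).1 hz.2 m hm

theorem IsLBFS.mem_sliceAt_of_unexplored (hL : IsLBFS G n σ) {s s' : ℕ} (hss' : s ≤ s')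
    (hs' : s' < n) {y : V} (hy : y ∈ sliceAt G σ n s) (hy' : ∀ m < s', σ m ≠ y) :
    σ s' ∈ sliceAt G σ n s := by
  have hunexp : ∀ m < s, σ m ≠ σ s' := fun m hm =>
    (mem_sliceAt_self (G := G) hL.1.injOn hs').1 m (hm.trans_le hss')
  refine ⟨hunexp, Std.Trichotomous.trichotomous _ _ (fun hlt => ?_)
    (hL.2 s (hss'.trans_lt hs') _ hunexp)⟩
  -- a label below that of the slice at `s` stays below `y`'s, so `σ s'` could not beat `y`
  rw [← hy.2] at hlt
  exact hL.2 s' hs' y hy' (lbfsLabel_lex_mono (hss'.trans hs'.le) hss' hlt)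

theorem IsMaxSubsliceAt.apply_notMem_sliceAt_of_lt (hinj : Set.InjOn σ (Set.Iio n))
    {t u u' : ℕ} (hu : IsMaxSubsliceAt G σ n t u) (hu' : IsMaxSubsliceAt G σ n t u')
    (hlt : u < u') : σ u' ∉ sliceAt G σ n u := by
  intro hmem
  rcases (sliceAt_subset_of_mem hlt.le hu'.1.le hmem (mem_sliceAt_self hinj hu'.1)).ssubset_or_eq
    with hss | heq
  · exact hu'.2.2 u hu.1 ⟨hss, hu.2.1⟩
  · have : σ u ∈ sliceAt G σ n u' := heq ▸ mem_sliceAt_self hinj hu.1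
    exact this.1 u hlt rfl

end LBFS

theorem subslice_universal_or_isolated_general {V : Type*} (G : SimpleGraph V) [DecidableRel G.Adj]
    (n : ℕ) (σ : ℕ → V) (hL : IsLBFS G n σ) (t : ℕ)
    (k : ℕ) (u : ℕ → ℕ) (hu : MaxSubsliceEnum G σ n t k u) :
    ∀ i j, 1 ≤ i → i < j → j ≤ k → ∀ y ∈ sliceAt G σ n (u i),
      (∀ z ∈ sliceAt G σ n (u j), G.Adj y z) ∨
      (∀ z ∈ sliceAt G σ n (u j), ¬ G.Adj y z) := by
  intro i j hi hij hj y hy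
  have hmi := hu.1 i hi (by omega)
  have hmj := hu.1 j (by omega) hj
  have hlt := hu.2.1 i j hi hij hj
  obtain ⟨m, hm, rfl⟩ : ∃ m < u j, σ m = y := by
    by_contra! hy'
    exact hmi.apply_notMem_sliceAt_of_lt hL.1.injOn hmj hlt
      (hL.mem_sliceAt_of_unexplored hlt.le hmj.1 hy hy')
  by_cases hadj : G.Adj (σ m) (σ (u j))
  · exact .inl fun z hz => (adj_iff_of_mem_sliceAt hmj.1.le hm hz).2 hadj
  · exact .inr fun z hz h => hadj ((adj_iff_of_mem_sliceAt hmj.1.le hm hz).1 h)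

/-- every vertex of a maximal subslice `S_i` is universal to or isolated
from each later maximal subslice `S_j`. -/
theorem subslice_universal_or_isolated {V : Type*} (G : SimpleGraph V) [DecidableRel G.Adj]
    (n : ℕ) (σ : ℕ → V) (hL : IsLBFS G n σ) (t : ℕ) (ht : t < n)
    (k : ℕ) (u : ℕ → ℕ) (hu : MaxSubsliceEnum G σ n t k u) :
    ∀ i j, 1 ≤ i → i < j → j ≤ k → ∀ y ∈ sliceAt G σ n (u i),
      (∀ z ∈ sliceAt G σ n (u j), G.Adj y z) ∨
      (∀ z ∈ sliceAt G σ n (u j), ¬ G.Adj y z) :=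
  subslice_universal_or_isolated_general G n σ hL t k u hu
end

section
/- Let S be a slice of an LBFS of a graph G with maximal subslices x, S_1, ..., S_k in order, where x is adjacent to all of S_1, and let C_1, ..., C_ℓ be the co-components of G[S_1]. If the complement of G[S] is disconnected, then: (1) N(x) ∩ S = S_1; (2) x and all of S_2, ..., S_k lie in a single co-component C of G[S]; (3) each C_i is either contained in C or disjoint from C. -/
/-- `d` is a transitive orientation of the subgraph of `G` induced on `S`:
each edge of `G[S]` gets exactly one direction, and directions compose transitively. -/
def IsTransOrientationOn {V : Type*} (G : SimpleGraph V) (S : Set V)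
    (d : V → V → Prop) : Prop :=
  (∀ a b, d a b → G.Adj a b ∧ a ∈ S ∧ b ∈ S) ∧
  (∀ a b, G.Adj a b → a ∈ S → b ∈ S → d a b ∨ d b a) ∧
  (∀ a b, d a b → ¬ d b a) ∧
  (∀ a b c, d a b → d b c → d a c)

/-- `M` is a module of `G`: every vertex outside `M` is adjacent to all of `M` or to
none of `M`. -/
def IsModule {V : Type*} (G : SimpleGraph V) (M : Set V) : Prop :=
  ∀ v ∉ M, (∀ m ∈ M, G.Adj v m) ∨ (∀ m ∈ M, ¬ G.Adj v m)

/-- `G` is prime: it has no non-trivial module. -/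
def IsPrimeGraph {V : Type*} (G : SimpleGraph V) : Prop :=
  ∀ M : Set V, IsModule G M → M.Subsingleton ∨ M = Set.univ

/-- `C` is a connected component of the subgraph of `G` induced on `S`. -/
def IsComponentOn {V : Type*} (G : SimpleGraph V) (S C : Set V) : Prop :=
  C ⊆ S ∧ C.Nonempty ∧
  (∀ a ∈ C, ∀ b ∈ C, Relation.ReflTransGen (fun p q => p ∈ S ∧ q ∈ S ∧ G.Adj p q) a b) ∧
  (∀ a ∈ C, ∀ b ∈ S, G.Adj a b → b ∈ C)

/-- `C` is a co-component of `G[S]`: a connected component of the complement of the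
subgraph of `G` induced on `S`. -/
def IsCoComponentOn {V : Type*} (G : SimpleGraph V) (S C : Set V) : Prop :=
  C ⊆ S ∧ C.Nonempty ∧
  (∀ a ∈ C, ∀ b ∈ C,
    Relation.ReflTransGen (fun p q => p ∈ S ∧ q ∈ S ∧ p ≠ q ∧ ¬ G.Adj p q) a b) ∧
  (∀ a ∈ C, ∀ b ∈ S, a ≠ b → ¬ G.Adj a b → b ∈ C)
/-!
Right after `x = σ t` is visited, the unvisited vertices with the largest label are exactly
those of `N(x) ∩ S`, so when `x` has a neighbour in `S` the next slice is `N(x) ∩ S`. That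
slice is a maximal subslice of `S`, and it meets `S_1`; since slices are laminar, it is `S_1`.
Every other `S_i` is then disjoint from `S_1`, hence anti-adjacent to `x` and inside the
co-component `C` of `x`. A co-component of `G[S_1]` is co-connected inside `S`, so once it
meets `C` it lies in `C`.
-/

theorem List.append_lt_append_of_lt {α : Type*} [LT α] {a b : List α} (s s' : List α)
    (hab : a < b) (hs : ∀ x ∈ b, ∀ y ∈ s, y < x) : a ++ s < b ++ s' := by
  induction hab with
  | @nil x b =>
    cases s with
    | nil => exact List.Lex.nil
    | cons y s => exact List.Lex.rel (hs x List.mem_cons_self y List.mem_cons_self)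
  | rel h => exact List.Lex.rel h
  | cons _ ih => exact List.Lex.cons (ih fun x hx => hs x (List.mem_cons_of_mem _ hx))

section LBFS

variable {V : Type*} {G : SimpleGraph V} [DecidableRel G.Adj] {σ : ℕ → V} {n t w w' : ℕ}
  {v : V}

theorem lbfsLabel_succ (G : SimpleGraph V) [DecidableRel G.Adj] (σ : ℕ → V) (n w : ℕ) (v : V) :
    lbfsLabel G σ n (w + 1) v =
      lbfsLabel G σ n w v ++ if G.Adj (σ w) v then [n - w] else [] := by
  unfold lbfsLabel
  rw [List.range_succ, List.filter_append, List.map_append]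
  split_ifs with h <;> simp [h]

theorem lt_of_mem_lbfsLabel_s13 {m : ℕ} (hw : w ≤ n) (hm : m ∈ lbfsLabel G σ n w v) :
    n - w < m := by
  simp only [lbfsLabel, List.mem_map, List.mem_filter, List.mem_range] at hm
  obtain ⟨i, ⟨hi, _⟩, rfl⟩ := hm
  omega

theorem lbfsLabel_eq_filter (hww' : w ≤ w') (hw' : w' ≤ n) (v : V) :
    lbfsLabel G σ n w v = (lbfsLabel G σ n w' v).filter (fun m => n - w < m) := by
  obtain ⟨d, rfl⟩ := Nat.exists_eq_add_of_le hww'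
  have hsplit : lbfsLabel G σ n (w + d) v = lbfsLabel G σ n w v ++
      (((List.range d).map (w + ·)).filter fun i => G.Adj (σ i) v).map (n - ·) := by
    unfold lbfsLabel
    rw [List.range_add, List.filter_append, List.map_append]
  rw [hsplit, List.filter_append, List.filter_eq_self.mpr, List.filter_eq_nil_iff.mpr,
    List.append_nil]
  · simp only [List.mem_map, List.mem_filter, List.mem_range]
    rintro _ ⟨_, ⟨⟨j, _, rfl⟩, _⟩, rfl⟩
    simp only [decide_eq_true_eq]
    omega
  · exact fun m hm => decide_eq_true (lt_of_mem_lbfsLabel_s13 (hww'.trans hw') hm)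

theorem sliceAt_subset_of_le (hww' : w ≤ w') (hw' : w' < n) (hv : v ∈ sliceAt G σ n w)
    (hv' : v ∈ sliceAt G σ n w') : sliceAt G σ n w' ⊆ sliceAt G σ n w := by
  intro y ⟨hy, hyv⟩
  refine ⟨fun i hi => hy i (hi.trans_le hww'), ?_⟩
  rw [lbfsLabel_eq_filter hww' hw'.le, hyv, ← hv'.2, ← lbfsLabel_eq_filter hww' hw'.le, hv.2]

theorem self_mem_sliceAt (hσ : Set.InjOn σ (Set.Iio n)) (hw : w < n) :
    σ w ∈ sliceAt G σ n w :=
  ⟨fun _ hi h => hi.ne (hσ (hi.trans hw) hw h), rfl⟩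

theorem lt_of_sliceAt_ssubset (hσ : Set.InjOn σ (Set.Iio n)) (hw : w < n)
    (h : sliceAt G σ n w ⊂ sliceAt G σ n t) : t < w := by
  have hσw : σ w ∈ sliceAt G σ n t := h.subset (self_mem_sliceAt hσ hw)
  refine lt_of_le_of_ne (not_lt.mp fun hwt => hσw.1 w hwt rfl) ?_
  rintro rfl
  exact h.ne rfl

theorem IsMaxSubsliceAt.sliceAt_eq_of_mem (h : IsMaxSubsliceAt G σ n t w)
    (h' : IsMaxSubsliceAt G σ n t w') (hv : v ∈ sliceAt G σ n w) (hv' : v ∈ sliceAt G σ n w') :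
    sliceAt G σ n w = sliceAt G σ n w' := by
  wlog hle : w ≤ w' generalizing w w'
  · exact (this h' h hv' hv (le_of_not_ge hle)).symm
  by_contra hne
  have hsub := sliceAt_subset_of_le hle h'.1 hv hv'
  exact h'.2.2 w h.1 ⟨hsub.ssubset_of_ne (Ne.symm hne), h.2.1⟩

theorem lbfsLabel_succ_of_adj (hv : v ∈ sliceAt G σ n t) (hadj : G.Adj (σ t) v) :
    lbfsLabel G σ n (t + 1) v = lbfsLabel G σ n t (σ t) ++ [n - t] := by
  rw [lbfsLabel_succ, if_pos hadj, hv.2]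

namespace IsLBFS

variable (hL : IsLBFS G n σ)
include hL

theorem lbfsLabel_le (ht : t < n) (hv : ∀ i < t, σ i ≠ v) :
    lbfsLabel G σ n t v ≤ lbfsLabel G σ n t (σ t) :=
  not_lt.mp (hL.2 t ht v hv)

theorem lbfsLabel_succ_lt (ht : t < n) (hv : ∀ i < t, σ i ≠ v)
    (hvx : ¬ (v ∈ sliceAt G σ n t ∧ G.Adj (σ t) v)) :
    lbfsLabel G σ n (t + 1) v < lbfsLabel G σ n t (σ t) ++ [n - t] := by
  rw [lbfsLabel_succ]
  rcases (hL.lbfsLabel_le ht hv).lt_or_eq with hlt | heq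
  · refine List.append_lt_append_of_lt _ _ hlt fun x hx y hy => ?_
    split_ifs at hy
    · rw [List.mem_singleton.mp hy]
      exact lt_of_mem_lbfsLabel_s13 ht.le hx
    · simp at hy
  · rw [if_neg fun hadj => hvx ⟨⟨hv, heq⟩, hadj⟩, List.append_nil, heq]
    simpa using List.append_left_lt (l₁ := lbfsLabel G σ n t (σ t)) (List.nil_lt_cons (n - t) [])

theorem sliceAt_succ_eq (ht : t + 1 < n)
    (hx : ∃ v ∈ sliceAt G σ n t, G.Adj (σ t) v) :
    sliceAt G σ n (t + 1) = G.neighborSet (σ t) ∩ sliceAt G σ n t := by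
  have hσ := hL.1.injOn
  -- The largest label at step `t + 1` is the one of `σ t`'s neighbour `v` in the slice.
  have hlabel : lbfsLabel G σ n (t + 1) (σ (t + 1)) = lbfsLabel G σ n t (σ t) ++ [n - t] := by
    obtain ⟨v, hvS, hadj⟩ := hx
    have hnext := (self_mem_sliceAt (G := G) hσ ht).1
    refine le_antisymm ?_ ?_
    · by_cases hnb : σ (t + 1) ∈ sliceAt G σ n t ∧ G.Adj (σ t) (σ (t + 1))
      · exact (lbfsLabel_succ_of_adj (G := G) hnb.1 hnb.2).le
      · exact (hL.lbfsLabel_succ_lt (by omega) (fun i _ => hnext i (by omega)) hnb).le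
    · rw [← lbfsLabel_succ_of_adj hvS hadj]
      exact hL.lbfsLabel_le ht (Nat.forall_lt_succ_right.mpr ⟨hvS.1, G.ne_of_adj hadj⟩)
  ext v
  constructor
  · rintro ⟨hv, hvl⟩
    by_contra hvx
    refine (hL.lbfsLabel_succ_lt (by omega) (fun i _ => hv i (by omega)) ?_).ne (hvl.trans hlabel)
    exact fun h => hvx ⟨h.2, h.1⟩
  · rintro ⟨hadj, hvS⟩
    exact ⟨Nat.forall_lt_succ_right.mpr ⟨hvS.1, G.ne_of_adj hadj⟩,
      (lbfsLabel_succ_of_adj hvS hadj).trans hlabel.symm⟩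

theorem isMaxSubsliceAt_succ (ht : t + 1 < n)
    (hx : ∃ v ∈ sliceAt G σ n t, G.Adj (σ t) v) : IsMaxSubsliceAt G σ n t (t + 1) := by
  have hσ := hL.1.injOn
  have hsucc := hL.sliceAt_succ_eq ht hx
  refine ⟨ht, ?_, fun w hw ⟨h1, h2⟩ => ?_⟩
  · rw [hsucc]
    refine (Set.ssubset_iff_of_subset Set.inter_subset_right).mpr
      ⟨σ t, self_mem_sliceAt hσ (by omega), fun h => G.irrefl h.1⟩
  · have hnext := self_mem_sliceAt (G := G) hσ ht
    exact h1.not_subset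
      (sliceAt_subset_of_le (lt_of_sliceAt_ssubset hσ hw h2) hw hnext (h1.subset hnext))

theorem neighborSet_inter_sliceAt (hw : IsMaxSubsliceAt G σ n t w)
    (hadj : ∀ v ∈ sliceAt G σ n w, G.Adj (σ t) v) :
    G.neighborSet (σ t) ∩ sliceAt G σ n t = sliceAt G σ n w := by
  have hσw := self_mem_sliceAt (G := G) hL.1.injOn hw.1
  have hx : ∃ v ∈ sliceAt G σ n t, G.Adj (σ t) v := ⟨σ w, hw.2.1.subset hσw, hadj _ hσw⟩
  have ht : t + 1 < n := lt_of_le_of_lt (lt_of_sliceAt_ssubset hL.1.injOn hw.1 hw.2.1) hw.1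
  have hsucc := hL.sliceAt_succ_eq ht hx
  rw [← hsucc]
  exact (hL.isMaxSubsliceAt_succ ht hx).sliceAt_eq_of_mem hw
    (hsucc ▸ ⟨hadj _ hσw, hw.2.1.subset hσw⟩) hσw

end IsLBFS

end LBFS

section CoComponent

variable {V : Type*} {G : SimpleGraph V} {S T C D : Set V} {x a b : V}

def coAdjOn (G : SimpleGraph V) (S : Set V) (p q : V) : Prop :=
  p ∈ S ∧ q ∈ S ∧ p ≠ q ∧ ¬ G.Adj p q

instance : Std.Symm (coAdjOn G S) :=
  ⟨fun _ _ ⟨hp, hq, hne, hna⟩ => ⟨hq, hp, hne.symm, fun h => hna h.symm⟩⟩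

theorem coAdjOn.mono (hST : S ⊆ T) (h : coAdjOn G S a b) : coAdjOn G T a b :=
  ⟨hST h.1, hST h.2.1, h.2.2⟩

def coComponentOn (G : SimpleGraph V) (S : Set V) (x : V) : Set V :=
  {v | v ∈ S ∧ Relation.ReflTransGen (coAdjOn G S) x v}

theorem mem_coComponentOn_self (hx : x ∈ S) : x ∈ coComponentOn G S x :=
  ⟨hx, .refl⟩

theorem isCoComponentOn_coComponentOn (hx : x ∈ S) :
    IsCoComponentOn G S (coComponentOn G S x) :=
  ⟨fun _ hv => hv.1, ⟨x, mem_coComponentOn_self hx⟩,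
    fun _ ha _ hb => (Std.Symm.symm _ _ ha.2).trans hb.2,
    fun _ ha _ hb hne hna => ⟨hb, ha.2.tail ⟨ha.1, hb, hne, hna⟩⟩⟩

theorem IsCoComponentOn.mem_of_reflTransGen (hC : IsCoComponentOn G S C) (ha : a ∈ C)
    (h : Relation.ReflTransGen (coAdjOn G S) a b) : b ∈ C := by
  induction h with
  | refl => exact ha
  | tail _ hbc ih => exact hC.2.2.2 _ ih _ hbc.2.1 hbc.2.2.1 hbc.2.2.2

theorem IsCoComponentOn.subset_or_disjoint (hD : IsCoComponentOn G T D)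
    (hC : IsCoComponentOn G S C) (hTS : T ⊆ S) : D ⊆ C ∨ Disjoint D C := by
  refine or_iff_not_imp_right.mpr fun hDC b hb => ?_
  obtain ⟨a, haD, haC⟩ := Set.not_disjoint_iff.mp hDC
  exact hC.mem_of_reflTransGen haC
    (Relation.ReflTransGen.mono (fun _ _ => coAdjOn.mono hTS) a b (hD.2.2.1 a haD b hb))

end CoComponent

theorem cocomponent_structure_of_slice_general {V : Type*} (G : SimpleGraph V)
    [DecidableRel G.Adj] (n : ℕ) (σ : ℕ → V) (hL : IsLBFS G n σ)
    (t : ℕ) (ht : t < n) (k : ℕ) (u : ℕ → ℕ) (hu : MaxSubsliceEnum G σ n t k u)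
    (hk : 1 ≤ k)
    (hadj : ∀ v ∈ sliceAt G σ n (u 1), G.Adj (σ t) v)
    (ℓc : ℕ) (Cc : ℕ → Set V)
    (hCc : ∀ i, 1 ≤ i → i ≤ ℓc → IsCoComponentOn G (sliceAt G σ n (u 1)) (Cc i)) :
    G.neighborSet (σ t) ∩ sliceAt G σ n t = sliceAt G σ n (u 1) ∧
    ∃ C, IsCoComponentOn G (sliceAt G σ n t) C ∧ σ t ∈ C ∧
      (∀ i, 2 ≤ i → i ≤ k → sliceAt G σ n (u i) ⊆ C) ∧
      (∀ i, 1 ≤ i → i ≤ ℓc → Cc i ⊆ C ∨ Disjoint (Cc i) C) := by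
  have hu1 := hu.1 1 le_rfl hk
  have hN := hL.neighborSet_inter_sliceAt hu1 hadj
  have hx := self_mem_sliceAt (G := G) hL.1.injOn ht
  have hC := isCoComponentOn_coComponentOn (G := G) hx
  refine ⟨hN, _, hC, mem_coComponentOn_self hx, fun i hi hik v hv => ?_,
    fun i hi hiℓ => (hCc i hi hiℓ).subset_or_disjoint hC hu1.2.1.subset⟩
  have hui := hu.1 i (by omega) hik
  have hvS := hui.2.1.subset hv
  -- `S_i` and `S_1` are distinct maximal subslices: `σ (u 1)` is visited before `S_i` is defined.
  have hv1 : v ∉ sliceAt G σ n (u 1) := fun hv1 =>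
    (hui.sliceAt_eq_of_mem hu1 hv hv1 ▸ self_mem_sliceAt hL.1.injOn hu1.1).1 (u 1)
      (hu.2.1 1 i le_rfl (by omega) hik) rfl
  exact hC.2.2.2 _ (mem_coComponentOn_self hx) v hvS (hv.1 t (hu.2.2.1 i (by omega) hik))
    fun h => hv1 (hN ▸ ⟨h, hvS⟩)

/-- if `x` is universal to `S_1` and the complement of `G[S]` is
disconnected, then `N(x) ∩ S = S_1`; `x` and `S_2, …, S_k` lie in one co-component `C`
of `G[S]`; and every co-component of `G[S_1]` is contained in or disjoint from `C`. -/
theorem cocomponent_structure_of_slice {V : Type*} (G : SimpleGraph V)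
    [DecidableRel G.Adj] (n : ℕ) (σ : ℕ → V) (hL : IsLBFS G n σ)
    (t : ℕ) (ht : t < n) (k : ℕ) (u : ℕ → ℕ) (hu : MaxSubsliceEnum G σ n t k u)
    (hk : 1 ≤ k)
    (hadj : ∀ v ∈ sliceAt G σ n (u 1), G.Adj (σ t) v)
    (ℓc : ℕ) (Cc : ℕ → Set V)
    (hCc : ∀ i, 1 ≤ i → i ≤ ℓc → IsCoComponentOn G (sliceAt G σ n (u 1)) (Cc i))
    (hCcAll : ∀ D, IsCoComponentOn G (sliceAt G σ n (u 1)) D →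
      ∃ i, 1 ≤ i ∧ i ≤ ℓc ∧ D = Cc i)
    (hdis : ∃ a ∈ sliceAt G σ n t, ∃ b ∈ sliceAt G σ n t,
      ¬ Relation.ReflTransGen
        (fun p q => p ∈ sliceAt G σ n t ∧ q ∈ sliceAt G σ n t ∧ p ≠ q ∧ ¬ G.Adj p q)
        a b) :
    G.neighborSet (σ t) ∩ sliceAt G σ n t = sliceAt G σ n (u 1) ∧
    ∃ C, IsCoComponentOn G (sliceAt G σ n t) C ∧ σ t ∈ C ∧
      (∀ i, 2 ≤ i → i ≤ k → sliceAt G σ n (u i) ⊆ C) ∧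
      (∀ i, 1 ≤ i → i ≤ ℓc → Cc i ⊆ C ∨ Disjoint (Cc i) C) :=
  cocomponent_structure_of_slice_general G n σ hL t ht k u hu hk hadj ℓc Cc hCc
end
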